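/- lim_{N→∞} 720 · p_4(N, 6) / C(N-1, 5) = 3/80, where p_4(N, 6) counts 6-tuples (a_1,…,a_6) of positive integers with a_1 ≥ ⋯ ≥ a_6, sum N, and a_i ≥ a_{i+1} + a_{i+2} + a_{i+3} for i = 1, 2, 3. -/

import Mathlib

/-!
Writing the six parts through the slacks of their defining inequalities identifies the admissible
tuples with sum `M + 20` with the lattice points `y ∈ ℕ⁵` satisfying
`2 y₀ + 4 y₁ + 8 y₂ + 15 y₃ + 20 y₄ ≤ M`. Tiling `ℕ⁵` by the boxes `∏ [wᵢ yᵢ, wᵢ yᵢ + wᵢ)` shows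
that `∏ wᵢ = 19200` times their number lies between `C(M + 5, 5)` and `C(M + 49, 5)`, the numbers
of lattice points of the standard simplices of sizes `M` and `M + 44`. Both bounds, like
`C(N - 1, 5) = C(M + 19, 5)`, are asymptotic to `M⁵ / 5!`, so the limit is `720 / 19200 = 3 / 80`.
-/

open Finset Filter Topology Asymptotics

theorem card_piAntidiag_nat_eq_multichoose {ι : Type*} [DecidableEq ι] (s : Finset ι) (n : ℕ) :
    #(piAntidiag s n) = (#s).multichoose n := by
  rw [← card_finsuppAntidiag_nat_eq_multichoose, finsuppAntidiag, card_map, card_attach]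

theorem tendsto_choose_add_div_choose_add (k a b : ℕ) :
    Tendsto (fun n : ℕ => ((n + a).choose k : ℝ) / (n + b).choose k) atTop (𝓝 1) := by
  have hshift : ∀ c : ℕ, (fun n : ℕ => ((n + c).choose k : ℝ)) ~[atTop]
      fun n : ℕ => (n : ℝ) ^ k / k.factorial := fun c => by
    have hc : (fun n : ℕ => (n : ℝ)) ~[atTop] fun n : ℕ => ((n + c : ℕ) : ℝ) :=
      isEquivalent_of_tendsto_one <|
        (tendsto_natCast_div_add_atTop (c : ℝ)).congr fun n => by simp
    exact ((isEquivalent_choose k).comp_tendsto (tendsto_add_atTop_nat c)).trans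
      ((hc.symm.pow k).div IsEquivalent.refl)
  refine (isEquivalent_iff_tendsto_one ?_).1 ((hshift a).trans (hshift b).symm)
  filter_upwards [eventually_ge_atTop k] with n hn
  exact Nat.cast_ne_zero.2 (Nat.choose_pos (by omega)).ne'

section WeightedSimplex

variable {ι : Type*} [Fintype ι] [DecidableEq ι]

def weightedSimplex (w : ι → ℕ) (M : ℕ) : Finset (ι → ℕ) :=
  {y ∈ Fintype.piFinset fun _ => range (M + 1) | ∑ i, w i * y i ≤ M}

variable {w : ι → ℕ} {M : ℕ}

theorem mem_weightedSimplex (hw : ∀ i, 0 < w i) {y : ι → ℕ} :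
    y ∈ weightedSimplex w M ↔ ∑ i, w i * y i ≤ M := by
  refine ⟨fun h => (mem_filter.1 h).2, fun h => mem_filter.2 ⟨?_, h⟩⟩
  refine Fintype.mem_piFinset.2 fun i => mem_range_succ_iff.2 ?_
  calc y i ≤ w i * y i := Nat.le_mul_of_pos_left _ (hw i)
    _ ≤ ∑ j, w j * y j := single_le_sum (f := fun j => w j * y j) (by simp) (mem_univ i)
    _ ≤ M := h

theorem mem_weightedSimplex_one {y : ι → ℕ} :
    y ∈ weightedSimplex (1 : ι → ℕ) M ↔ ∑ i, y i ≤ M := by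
  simp [mem_weightedSimplex]

theorem card_weightedSimplex_one (M : ℕ) :
    #(weightedSimplex (1 : ι → ℕ) M) = (M + Fintype.card ι).choose (Fintype.card ι) := by
  have hfiber : ∀ n ∈ range (M + 1),
      {y ∈ weightedSimplex (1 : ι → ℕ) M | ∑ i, y i = n} = piAntidiag univ n := by
    intro n hn
    ext y
    simp only [mem_filter, mem_weightedSimplex_one, mem_piAntidiag, mem_univ, implies_true,
      and_true]
    exact ⟨And.right, fun h => ⟨h ▸ mem_range_succ_iff.1 hn, h⟩⟩
  rw [card_eq_sum_card_fiberwise (f := fun y : ι → ℕ => ∑ i, y i) (t := range (M + 1))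
    fun y hy => mem_range_succ_iff.2 (mem_weightedSimplex_one.1 hy),
    sum_congr rfl fun n hn => congrArg card (hfiber n hn)]
  simp_rw [card_piAntidiag_nat_eq_multichoose, card_univ, Nat.sum_range_multichoose]

def boxUnion (w : ι → ℕ) (M : ℕ) : Finset (ι → ℕ) :=
  (weightedSimplex w M ×ˢ Fintype.piFinset fun i => range (w i)).image
    fun p i => w i * p.1 i + p.2 i

theorem card_boxUnion : #(boxUnion w M) = (∏ i, w i) * #(weightedSimplex w M) := by
  rw [boxUnion, card_image_of_injOn, card_product, Fintype.card_piFinset, mul_comm]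
  · simp only [card_range]
  rintro ⟨y, r⟩ hyr ⟨y', r'⟩ hyr' h
  simp only [coe_product, Set.mem_prod, mem_coe, Fintype.mem_piFinset, mem_range] at hyr hyr'
  have hdivMod : ∀ i, y i = y' i ∧ r i = r' i := fun i => by
    have hi : w i * y i + r i = w i * y' i + r' i := congrFun h i
    have hw : 0 < w i := (Nat.zero_le _).trans_lt (hyr.2 i)
    have e := (Nat.div_mod_unique (d := y i) hw).2 ⟨add_comm _ _, hyr.2 i⟩
    have e' := (Nat.div_mod_unique (d := y' i) hw).2 ⟨add_comm _ _, hyr'.2 i⟩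
    rw [hi] at e
    exact ⟨e.1.symm.trans e'.1, e.2.symm.trans e'.2⟩
  exact Prod.ext (funext fun i => (hdivMod i).1) (funext fun i => (hdivMod i).2)

theorem weightedSimplex_one_subset_boxUnion (hw : ∀ i, 0 < w i) :
    weightedSimplex 1 M ⊆ boxUnion w M := by
  intro z hz
  refine mem_image.2 ⟨(fun i => z i / w i, fun i => z i % w i), mem_product.2 ⟨?_, ?_⟩, ?_⟩
  · rw [mem_weightedSimplex hw]
    exact (sum_le_sum fun i _ => Nat.mul_div_le (z i) (w i)).trans (mem_weightedSimplex_one.1 hz)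
  · exact Fintype.mem_piFinset.2 fun i => mem_range.2 (Nat.mod_lt _ (hw i))
  · exact funext fun i => Nat.div_add_mod (z i) (w i)

theorem boxUnion_subset_weightedSimplex_one (hw : ∀ i, 0 < w i) :
    boxUnion w M ⊆ weightedSimplex 1 (M + ∑ i, (w i - 1)) := by
  simp only [boxUnion, image_subset_iff, mem_product, Fintype.mem_piFinset, mem_range,
    mem_weightedSimplex_one, mem_weightedSimplex hw, and_imp, Prod.forall]
  intro y r hy hr
  rw [sum_add_distrib]
  exact add_le_add hy (sum_le_sum fun i _ => Nat.le_sub_one_of_lt (hr i))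

theorem tendsto_prod_mul_card_weightedSimplex_div_choose (hw : ∀ i, 0 < w i) (b : ℕ) :
    Tendsto (fun M => (((∏ i, w i) * #(weightedSimplex w M) : ℕ) : ℝ) /
      (M + b).choose (Fintype.card ι)) atTop (𝓝 1) := by
  set k := Fintype.card ι
  have hlower : ∀ M, (M + k).choose k ≤ (∏ i, w i) * #(weightedSimplex w M) := fun M => by
    rw [← card_weightedSimplex_one, ← card_boxUnion]
    exact card_le_card (weightedSimplex_one_subset_boxUnion hw)
  have hupper : ∀ M, (∏ i, w i) * #(weightedSimplex w M) ≤ (M + ∑ i, (w i - 1) + k).choose k :=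
    fun M => by
      rw [← card_weightedSimplex_one, ← card_boxUnion]
      exact card_le_card (boxUnion_subset_weightedSimplex_one hw)
  have hlim := tendsto_choose_add_div_choose_add k (∑ i, (w i - 1) + k) b
  simp only [← add_assoc] at hlim
  refine tendsto_of_tendsto_of_tendsto_of_le_of_le (tendsto_choose_add_div_choose_add k k b)
    hlim (fun M => ?_) (fun M => ?_)
  · exact div_le_div_of_nonneg_right (Nat.cast_le.2 (hlower M)) (Nat.cast_nonneg _)
  · exact div_le_div_of_nonneg_right (Nat.cast_le.2 (hupper M)) (Nat.cast_nonneg _)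

end WeightedSimplex

def noQuadrilateralParts (N : ℕ) : Set (Fin 6 → ℕ) :=
  {a | (∀ i, 1 ≤ a i) ∧ (∀ i j : Fin 6, i ≤ j → a j ≤ a i) ∧ (∑ i, a i) = N ∧
    a 1 + a 2 + a 3 ≤ a 0 ∧ a 2 + a 3 + a 4 ≤ a 1 ∧ a 3 + a 4 + a 5 ≤ a 2}

theorem mem_noQuadrilateralParts_iff {N : ℕ} {a : Fin 6 → ℕ} :
    a ∈ noQuadrilateralParts N ↔ 1 ≤ a 5 ∧ a 5 ≤ a 4 ∧ a 4 ≤ a 3 ∧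
      a 0 + a 1 + a 2 + a 3 + a 4 + a 5 = N ∧
      a 1 + a 2 + a 3 ≤ a 0 ∧ a 2 + a 3 + a 4 ≤ a 1 ∧ a 3 + a 4 + a 5 ≤ a 2 := by
  simp only [noQuadrilateralParts, Set.mem_ofPred_eq, Fin.sum_univ_six]
  constructor
  · rintro ⟨hpos, hanti, hsum, hq⟩
    exact ⟨hpos 5, hanti 4 5 (by decide), hanti 3 4 (by decide), hsum, hq⟩
  · rintro ⟨h5, h54, h43, hsum, hq₀, hq₁, hq₂⟩
    refine ⟨fun i => ?_, Fin.antitone_iff_succ_le.2 fun i => ?_, hsum, hq₀, hq₁, hq₂⟩ <;>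
      fin_cases i <;>
      simp only [Fin.reduceFinMk, Fin.zero_eta, Fin.mk_one, Fin.reduceSucc, Fin.reduceCastSucc] <;>
      omega

/- `y₀, y₁` are the slacks of the inequalities at `i = 1, 2`, `y₂, y₃` the gaps `a₃ - a₄, a₄ - a₅`
and `y₄ = a₅ - 1`; `a₀` absorbs the rest of `M + 20`. Since
`∑ aᵢ = 20 + 2 y₀ + 4 y₁ + 8 y₂ + 15 y₃ + 20 y₄ + (a₀ - a₁ - a₂ - a₃)`, the inequality at `i = 0`
becomes `y ∈ weightedSimplex ![2, 4, 8, 15, 20] M`. -/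
def ofSlacks (M : ℕ) (y : Fin 5 → ℕ) : Fin 6 → ℕ :=
  let a₅ := 1 + y 4
  let a₄ := a₅ + y 3
  let a₃ := a₄ + y 2
  let a₂ := a₃ + a₄ + a₅ + y 1
  let a₁ := a₂ + a₃ + a₄ + y 0
  ![M + 20 - (a₁ + a₂ + a₃ + a₄ + a₅), a₁, a₂, a₃, a₄, a₅]

def slacks (a : Fin 6 → ℕ) : Fin 5 → ℕ :=
  ![a 1 - (a 2 + a 3 + a 4), a 2 - (a 3 + a 4 + a 5), a 3 - a 4, a 4 - a 5, a 5 - 1]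

theorem leftInverse_slacks_ofSlacks (M : ℕ) : Function.LeftInverse slacks (ofSlacks M) := by
  intro y
  ext i
  fin_cases i <;> simp [slacks, ofSlacks]

theorem ofSlacks_slacks {M : ℕ} {a : Fin 6 → ℕ} (ha : a ∈ noQuadrilateralParts (M + 20)) :
    ofSlacks M (slacks a) = a := by
  rw [mem_noQuadrilateralParts_iff] at ha
  ext i
  fin_cases i <;>
    simp only [slacks, ofSlacks, Fin.reduceFinMk, Fin.zero_eta, Fin.mk_one, Matrix.cons_val] <;>
    omega

theorem ofSlacks_mem_noQuadrilateralParts_iff {M : ℕ} {y : Fin 5 → ℕ} :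
    ofSlacks M y ∈ noQuadrilateralParts (M + 20) ↔ y ∈ weightedSimplex ![2, 4, 8, 15, 20] M := by
  rw [mem_noQuadrilateralParts_iff, mem_weightedSimplex (by decide), Fin.sum_univ_five]
  simp only [ofSlacks, Matrix.cons_val, Matrix.cons_val_zero, Matrix.cons_val_one]
  omega

theorem ncard_noQuadrilateralParts (M : ℕ) :
    (noQuadrilateralParts (M + 20)).ncard = #(weightedSimplex ![2, 4, 8, 15, 20] M) := by
  have himage :
      noQuadrilateralParts (M + 20) = ofSlacks M '' weightedSimplex ![2, 4, 8, 15, 20] M := by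
    ext a
    refine ⟨fun ha => ⟨slacks a, ?_, ofSlacks_slacks ha⟩, ?_⟩
    · rw [mem_coe, ← ofSlacks_mem_noQuadrilateralParts_iff, ofSlacks_slacks ha]
      exact ha
    · rintro ⟨y, hy, rfl⟩
      exact ofSlacks_mem_noQuadrilateralParts_iff.2 hy
  rw [himage, Set.ncard_image_of_injective _ (leftInverse_slacks_ofSlacks M).injective,
    Set.ncard_coe_finset]

theorem prob_no_quadrilateral_six_pieces :
    Filter.Tendsto (fun N : ℕ =>
      (720 : ℝ) * (Set.ncard {a : Fin 6 → ℕ | (∀ i, 1 ≤ a i) ∧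
          (∀ i j : Fin 6, i ≤ j → a j ≤ a i) ∧ (∑ i, a i) = N ∧
          a 1 + a 2 + a 3 ≤ a 0 ∧ a 2 + a 3 + a 4 ≤ a 1 ∧ a 3 + a 4 + a 5 ≤ a 2} : ℕ) /
        (Nat.choose (N - 1) 5 : ℝ))
      Filter.atTop (nhds (3 / 80)) := by
  rw [← tendsto_add_atTop_iff_nat 20]
  have hlim := (tendsto_prod_mul_card_weightedSimplex_div_choose (w := ![2, 4, 8, 15, 20])
    (by decide) 19).const_mul (3 / 80 : ℝ)
  rw [mul_one] at hlim
  refine hlim.congr fun M => ?_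
  rw [← ncard_noQuadrilateralParts, Nat.add_sub_assoc (by norm_num), noQuadrilateralParts]
  simp only [Fintype.card_fin, Fin.prod_univ_five]
  push_cast
  ring
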